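/- arXiv:0803.4081 — 8 statements merged into one kernel-verified Lean document; each statement's English description precedes it below -/
import Mathlib

section
/- Let G be a finite group and M a central subgroup of G. Given a homomorphism f : G → M, the endomorphism α_f defined by α_f(x) = x·f(x) is an automorphism of G if and only if f(m) ≠ m⁻¹ for every non-trivial element m ∈ M. -/
/-- For a homomorphism f : G → M into a central subgroup M, the endomorphism
α_f(x) = x·f(x) is an automorphism of G iff f(m) ≠ m⁻¹ for every nontrivial m ∈ M. -/
theorem stmt1 {G : Type*} [Group G] [Finite G] (M : Subgroup G)
    (hM : M ≤ Subgroup.center G) (f : G →* ↥M) :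
    Function.Bijective (fun x : G => x * (f x : G)) ↔
      ∀ m : ↥M, m ≠ 1 → f (m : G) ≠ m⁻¹ := by
  have hc : ∀ (m : M) (y : G), (m : G) * y = y * m := fun m y =>
    (Subgroup.mem_center_iff.mp (hM m.2) y).symm
  let α : G →* G :=
    { toFun := fun x => x * (f x : G)
      map_one' := by simp
      map_mul' := by
        intro x y
        simp only [map_mul, Subgroup.coe_mul]
        rw [mul_assoc, mul_assoc, ← mul_assoc (f x : G) y, hc (f x) y, mul_assoc]
      }
  have hinj : Function.Injective (fun x : G => x * (f x : G)) ↔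
      ∀ m : ↥M, m ≠ 1 → f (m : G) ≠ m⁻¹ := by
    constructor
    · intro hi m hm hf
      apply hm
      have : (fun x : G => x * (f x : G)) (m : G) = (fun x : G => x * (f x : G)) 1 := by
        simp [hf]
      have := hi this
      exact Subtype.ext (by simpa using this)
    · intro h
      have hk : ∀ x : G, x * (f x : G) = 1 → x = 1 := by
        intro x hx
        have hxM : x ∈ M := by
          have hx' : (f x : G) * x = 1 := (hc (f x) x).trans hx
          have : x = (f x : G)⁻¹ := eq_inv_of_mul_eq_one_right hx'
          rw [this]; exact M.inv_mem (f x).2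
        set m : M := ⟨x, hxM⟩
        by_contra hx1
        have hm1 : m ≠ 1 := fun h' => hx1 (congrArg Subtype.val h')
        apply h m hm1
        apply Subtype.ext
        have : (f (m : G) : G) = (m : G)⁻¹ := eq_inv_of_mul_eq_one_right (by rwa [← hc (f x) x] at hx ⊢)
        simpa using this
      intro a b hab
      have : α (a * b⁻¹) = 1 := by
        simp only [α, MonoidHom.coe_mk, OneHom.coe_mk, map_mul, map_inv]
        have hab' : a * (f a : G) = b * (f b : G) := hab
        rw [hab']
        group
      have := hk _ (this)
      exact mul_inv_eq_one.mp this
  rw [← Finite.injective_iff_bijective]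
  exact hinj
end

section
/- Let G be a finite group and M a central subgroup of G such that M is contained in the kernel of every homomorphism from G to M. Then the map f ↦ α_f (where α_f(x) = x·f(x)) is a bijection from Hom(G, M) onto the set Aut^M(G) of automorphisms of G centralizing G/M. -/
/-- If M is a central subgroup of a finite group G contained in the kernel of every
homomorphism G → M, then f ↦ α_f (α_f(x) = x·f(x)) is a bijection from Hom(G,M)
onto the set of automorphisms of G centralizing G/M. -/
theorem stmt2 {G : Type*} [Group G] [Finite G] (M : Subgroup G)
    (hM : M ≤ Subgroup.center G)
    (hker : ∀ f : G →* ↥M, ∀ m ∈ M, f m = 1) :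
    ∃ e : (G →* ↥M) ≃ {α : G ≃* G // ∀ x : G, x⁻¹ * α x ∈ M},
      ∀ (f : G →* ↥M) (x : G), (e f : G ≃* G) x = x * (f x : G) := by
  classical
  have hcomm : ∀ (x : G) (m : G), m ∈ M → m * x = x * m := fun x m hm =>
    (Subgroup.mem_center_iff.mp (hM hm) x).symm
  -- forward map
  let fwdHom : (G →* ↥M) → (G →* G) := fun f =>
    { toFun := fun x => x * (f x : G)
      map_one' := by simp
      map_mul' := fun x y => by
        have := hcomm y (f x : G) (f x).2
        push_cast [map_mul]
        rw [mul_assoc x y, ← mul_assoc y, ← this, mul_assoc, mul_assoc] }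
  have fwdHom_apply : ∀ (f : G →* ↥M) (x : G), fwdHom f x = x * (f x : G) :=
    fun _ _ => rfl
  have fwdInj : ∀ f : G →* ↥M, Function.Injective (fwdHom f) := by
    intro f
    rw [injective_iff_map_eq_one]
    intro x hx
    rw [fwdHom_apply] at hx
    have hxM : x ∈ M := by
      have : x = ((f x : G))⁻¹ := by
        rw [eq_inv_iff_mul_eq_one]; exact hx
      rw [this]; exact M.inv_mem (f x).2
    have : f x = 1 := hker f x hxM
    rw [this] at hx; simpa using hx
  let fwd : (G →* ↥M) → {α : G ≃* G // ∀ x : G, x⁻¹ * α x ∈ M} := fun f =>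
    ⟨MulEquiv.ofBijective (fwdHom f) ((Finite.injective_iff_bijective).mp (fwdInj f)),
      by
        intro x
        have : (MulEquiv.ofBijective (fwdHom f)
            ((Finite.injective_iff_bijective).mp (fwdInj f))) x = x * (f x : G) := rfl
        rw [this, ← mul_assoc, inv_mul_cancel, one_mul]
        exact (f x).2⟩
  let inv : {α : G ≃* G // ∀ x : G, x⁻¹ * α x ∈ M} → (G →* ↥M) := fun α =>
    { toFun := fun x => ⟨x⁻¹ * α.1 x, α.2 x⟩
      map_one' := by ext; simp
      map_mul' := fun x y => by
        ext
        show (x * y)⁻¹ * α.1 (x * y) = (x⁻¹ * α.1 x) * (y⁻¹ * α.1 y)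
        have h := hcomm y⁻¹ (x⁻¹ * α.1 x) (α.2 x)
        rw [map_mul, show (x⁻¹ * α.1 x) * (y⁻¹ * α.1 y) = ((x⁻¹ * α.1 x) * y⁻¹) * α.1 y
          from (mul_assoc _ _ _).symm, h]
        group }
  refine ⟨Equiv.mk fwd inv ?_ ?_, fun f x => rfl⟩
  · intro f
    ext x
    show x⁻¹ * (x * (f x : G)) = (f x : G)
    rw [← mul_assoc, inv_mul_cancel, one_mul]
  · intro α
    ext x
    show x * (x⁻¹ * α.1 x) = α.1 x
    rw [← mul_assoc, mul_inv_cancel, one_mul]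
end

section
/- Let G be a finite group and M a central subgroup of G with M contained in the kernel of every homomorphism G → M. Then the group Aut^M_{Z(G)}(G) of automorphisms of G that centralize both G/M and Z(G) is isomorphic to Hom(G/Z(G), M). -/
open scoped IsMulCommutative

/-!
For `f : G ⧸ Z(G) →* M` the map `x ↦ x * f(x Z(G))` is an automorphism of `G`: it is a
homomorphism because `M` is central, and twisting by `f * g` is the composite of the twists by
`f` and `g` because `f` kills `M ⊆ Z(G)`, so `f⁻¹` twists back. Conversely an automorphism `α` in
`Aut^M_{Z(G)}(G)` is the twist by `x Z(G) ↦ x⁻¹ * α x`, which is well defined as `α` fixes `Z(G)`.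
-/

open Subgroup

section CentralTwist

variable {G : Type*} [Group G] {M : Subgroup G} (hM : M ≤ center G)

def centralTwist (f : G ⧸ center G →* M) : G →* G where
  toFun x := x * f x
  map_one' := by simp
  map_mul' x y := by
    have hcomm : y * (f x : G) = f x * y := mem_center_iff.mp (hM (f x).2) y
    simp only [QuotientGroup.mk_mul, map_mul, Subgroup.coe_mul]
    rw [mul_assoc x, ← mul_assoc y, hcomm]
    group

@[simp]
theorem centralTwist_apply (f : G ⧸ center G →* M) (x : G) :
    centralTwist hM f x = x * f x :=
  rfl

theorem centralTwist_one : centralTwist hM 1 = MonoidHom.id G := by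
  ext x
  simp

theorem centralTwist_mul [IsMulCommutative M] (f g : G ⧸ center G →* M) :
    centralTwist hM (f * g) = (centralTwist hM f).comp (centralTwist hM g) := by
  ext x
  have hg : ((x * g x : G) : G ⧸ center G) = x := by
    rw [QuotientGroup.mk_mul, (QuotientGroup.eq_one_iff _).mpr (hM (g x).2), mul_one]
  simp only [centralTwist_apply, MonoidHom.comp_apply, hg, MonoidHom.mul_apply,
    Subgroup.coe_mul, mul_assoc]
  rw [← Subgroup.coe_mul, ← Subgroup.coe_mul, mul_comm]

def centralTwistAut [IsMulCommutative M] : (G ⧸ center G →* M) →* MulAut G where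
  toFun f :=
    { toFun := centralTwist hM f
      invFun := centralTwist hM f⁻¹
      left_inv x := by
        simpa [centralTwist_one] using
          DFunLike.congr_fun (centralTwist_mul hM f⁻¹ f).symm x
      right_inv x := by
        simpa [centralTwist_one] using
          DFunLike.congr_fun (centralTwist_mul hM f f⁻¹).symm x
      map_mul' := map_mul _ }
  map_one' := by
    ext x
    simp
  map_mul' f g := by
    ext x
    exact DFunLike.congr_fun (centralTwist_mul hM f g) x

variable [IsMulCommutative M]

@[simp]
theorem centralTwistAut_apply (f : G ⧸ center G →* M) (x : G) :
    centralTwistAut hM f x = x * f x :=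
  rfl

theorem centralTwistAut_injective : Function.Injective (centralTwistAut hM) := by
  intro f g hfg
  refine QuotientGroup.monoidHom_ext _ (MonoidHom.ext fun x => Subtype.ext ?_)
  simpa using DFunLike.congr_fun hfg x

def autDisplacement (α : MulAut G) (hα : ∀ x, x⁻¹ * α x ∈ M) : G →* M where
  toFun x := ⟨x⁻¹ * α x, hα x⟩
  map_one' := by ext; simp
  map_mul' x y := by
    have hcomm : y⁻¹ * (x⁻¹ * α x) = (x⁻¹ * α x) * y⁻¹ :=
      mem_center_iff.mp (hM (hα x)) y⁻¹
    ext
    simp only [map_mul, Subgroup.coe_mul, mul_inv_rev]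
    rw [mul_assoc, ← mul_assoc x⁻¹, ← mul_assoc y⁻¹, hcomm]
    group

theorem mem_range_centralTwistAut_iff (α : MulAut G) :
    α ∈ (centralTwistAut hM).range ↔
      (∀ x, x⁻¹ * α x ∈ M) ∧ ∀ z ∈ center G, α z = z := by
  constructor
  · rintro ⟨f, rfl⟩
    refine ⟨fun x => by simp, fun z hz => ?_⟩
    simp [(QuotientGroup.eq_one_iff z).mpr hz]
  · rintro ⟨hα, hcenter⟩
    refine ⟨QuotientGroup.lift _ (autDisplacement hM α hα) fun z hz => ?_, ?_⟩
    · ext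
      simp [autDisplacement, hcenter z hz]
    · ext x
      simp [autDisplacement]

end CentralTwist

theorem stmt3_general {G : Type*} [Group G] (M : Subgroup G) [IsMulCommutative M]
    (hM : M ≤ Subgroup.center G) :
    ∃ e : ((G ⧸ Subgroup.center G) →* ↥M) ≃
        {α : MulAut G // (∀ x : G, x⁻¹ * α x ∈ M) ∧ ∀ z ∈ Subgroup.center G, α z = z},
      (∀ f g : (G ⧸ Subgroup.center G) →* ↥M,
        ((e (f * g) : MulAut G)) = (e f : MulAut G) * (e g : MulAut G)) ∧
      (∀ (f : (G ⧸ Subgroup.center G) →* ↥M) (x : G),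
        (e f : MulAut G) x = x * (f (QuotientGroup.mk x) : G)) :=
  ⟨(MonoidHom.ofInjective (centralTwistAut_injective hM)).toEquiv.trans
      (Equiv.subtypeEquivRight (mem_range_centralTwistAut_iff hM)),
    map_mul (centralTwistAut hM), centralTwistAut_apply hM⟩

/-- If M is a central subgroup of a finite group G contained in the kernel of every
homomorphism G → M, then Aut^M_{Z(G)}(G) is isomorphic to Hom(G/Z(G), M): there is a
bijection, multiplicative in both directions, given by α ↦ f_α. -/
theorem stmt3 {G : Type*} [Group G] [Finite G] (M : Subgroup G) [IsMulCommutative M]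
    (hM : M ≤ Subgroup.center G)
    (hker : ∀ f : G →* ↥M, ∀ m ∈ M, f m = 1) :
    ∃ e : ((G ⧸ Subgroup.center G) →* ↥M) ≃
        {α : MulAut G // (∀ x : G, x⁻¹ * α x ∈ M) ∧ ∀ z ∈ Subgroup.center G, α z = z},
      (∀ f g : (G ⧸ Subgroup.center G) →* ↥M,
        ((e (f * g) : MulAut G)) = (e f : MulAut G) * (e g : MulAut G)) ∧
      (∀ (f : (G ⧸ Subgroup.center G) →* ↥M) (x : G),
        (e f : MulAut G) x = x * (f (QuotientGroup.mk x) : G)) :=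
  stmt3_general M hM
end

section
/- Let G be a non-abelian finite p-group and M a central subgroup of G. If Aut^M_{Z(G)}(G) = Inn(G), then G has nilpotency class 2, γ₂(G) ≤ M, and M is cyclic. -/
/-!
Every inner automorphism lies in `Aut^M_{Z(G)}(G)`, so `x⁻¹ g x g⁻¹ ∈ M` for all `g, x`,
whence `γ₂(G) ≤ M ≤ Z(G)`. In class two, `g ↦ (x ↦ ⁅g, x⁆)` is a homomorphism
`G → Hom(G/Z(G), M)` with kernel `Z(G)`. It is onto: a homomorphism `f : G/Z(G) → M` yields the
automorphism `x ↦ x f(x)` of `Aut^M_{Z(G)}(G)`, which by hypothesis is conjugation by some `g`,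
and then `⁅g, x⁆ = f(x)`. So the nontrivial abelian `p`-group `Q = G/Z(G)` is isomorphic to
`Hom(Q, M)`. Counting solutions of `x ^ p = 1` on both sides gives
`p ^ d = |Q/Q^p| = |Hom(Q/Q^p, M[p])| = |M[p]| ^ d` with `d ≥ 1`, so `M[p]` has order `p`, and an
abelian `p`-group with only `p` solutions of `x ^ p = 1` is cyclic.
-/

open Subgroup
open scoped commutatorElement IsMulCommutative

section PowerMaps

variable {H : Type*} [CommGroup H] [Finite H]

theorem MonoidHom.card_ker_eq_index_range {G : Type*} [Group G] [Finite G] (f : G →* G) :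
    Nat.card f.ker = f.range.index := by
  have h₁ := f.ker.card_mul_index
  have h₂ := f.range.index_mul_card
  rw [Subgroup.index_ker] at h₁
  exact Nat.eq_of_mul_eq_mul_right Nat.card_pos (h₁.trans h₂.symm)

theorem card_ker_powMonoidHom_pow_le (n k : ℕ) :
    Nat.card (powMonoidHom (n ^ k) : H →* H).ker ≤
      Nat.card (powMonoidHom n : H →* H).ker ^ k := by
  induction k with
  | zero => simp
  | succ k ih =>
    set K := (powMonoidHom (n ^ (k + 1)) : H →* H).ker
    set f : H →* H := powMonoidHom n
    have hker : f.ker ≤ K := fun x (hx : x ^ n = 1) => by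
      change x ^ n ^ (k + 1) = 1
      rw [pow_succ', pow_mul, hx, one_pow]
    have hmap : K.map f ≤ (powMonoidHom (n ^ k) : H →* H).ker := by
      rintro _ ⟨x, hx, rfl⟩
      simpa [K, f, ← pow_mul, ← pow_succ'] using hx
    calc Nat.card K = Nat.card (f.ker.subgroupOf K) * f.ker.relIndex K :=
          (f.ker.subgroupOf K).card_mul_index.symm
      _ = Nat.card f.ker * Nat.card (K.map f) := by
          rw [Subgroup.relIndex_ker, Nat.card_congr (subgroupOfEquivOfLe hker).toEquiv]
      _ ≤ Nat.card f.ker * Nat.card (powMonoidHom (n ^ k) : H →* H).ker :=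
          Nat.mul_le_mul_left _ (Subgroup.card_le_of_le hmap)
      _ ≤ Nat.card f.ker ^ (k + 1) := by rw [pow_succ']; exact Nat.mul_le_mul_left _ ih

theorem IsPGroup.isCyclic_of_card_ker_powMonoidHom_le {p : ℕ} [Fact p.Prime] (hH : IsPGroup p H)
    (h : Nat.card (powMonoidHom p : H →* H).ker ≤ p) : IsCyclic H := by
  obtain ⟨m, hm⟩ := hH.exists_card_eq
  obtain ⟨k, -, hk⟩ :=
    (Nat.dvd_prime_pow Fact.out).mp (hm ▸ Group.exponent_dvd_nat_card (G := H))
  have htop : (powMonoidHom (p ^ k) : H →* H).ker = ⊤ :=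
    eq_top_iff.mpr fun x _ => by simpa [← hk] using Monoid.pow_exponent_eq_one x
  refine IsCyclic.of_exponent_eq_card (le_antisymm (Nat.le_of_dvd Nat.card_pos
    Group.exponent_dvd_nat_card) ?_)
  calc Nat.card H = Nat.card (powMonoidHom (p ^ k) : H →* H).ker := by
        rw [htop, Subgroup.card_top]
    _ ≤ Nat.card (powMonoidHom p : H →* H).ker ^ k := card_ker_powMonoidHom_pow_le p k
    _ ≤ p ^ k := Nat.pow_le_pow_left h k
    _ = Monoid.exponent H := hk.symm

theorem IsPGroup.card_ker_powMonoidHom_ne_one {p : ℕ} [Fact p.Prime] [Nontrivial H]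
    (hH : IsPGroup p H) : Nat.card (powMonoidHom p : H →* H).ker ≠ 1 := by
  obtain ⟨n, hn, hcard⟩ := hH.nontrivial_iff_card.mp ‹_›
  obtain ⟨x, hx⟩ := exists_prime_orderOf_dvd_card' p (hcard ▸ dvd_pow_self p hn.ne')
  have hx1 : x ≠ 1 := by
    rintro rfl
    exact (Fact.out : p.Prime).one_lt.ne (orderOf_one.symm.trans hx)
  rw [Ne, Subgroup.card_eq_one, Subgroup.eq_bot_iff_forall]
  exact fun h => hx1 (h x (by simp [← hx, pow_orderOf_eq_one]))

end PowerMaps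

section ElementaryAbelian

theorem Module.natCard_linearMap_eq_pow_finrank {K V W : Type*} [Field K] [AddCommGroup V]
    [Module K V] [Module.Finite K V] [AddCommGroup W] [Module K W] [Module.Finite K W] :
    Nat.card (V →ₗ[K] W) = Nat.card W ^ Module.finrank K V := by
  rw [Module.natCard_eq_pow_finrank (K := K) (V := V →ₗ[K] W), Module.finrank_linearMap,
    Module.natCard_eq_pow_finrank (K := K) (V := W), ← pow_mul, mul_comm]

variable {p : ℕ} [Fact p.Prime]

-- Stated for an arbitrary `ZMod p`-module structure: with the one built by
-- `AddCommGroup.zmodModule` in context, instance search for `Module.Finite` over the field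
-- `ZMod p` gets stuck.
theorem ZMod.exists_natCard_eq_pow_and_natCard_addMonoidHom_eq_pow {V W : Type*}
    [AddCommGroup V] [Module (ZMod p) V] [Finite V] [AddCommGroup W] [Module (ZMod p) W]
    [Finite W] : ∃ d, Nat.card V = p ^ d ∧ Nat.card (V →+ W) = Nat.card W ^ d := by
  have : Module.Finite (ZMod p) V := .of_finite
  have : Module.Finite (ZMod p) W := .of_finite
  refine ⟨Module.finrank (ZMod p) V, ?_, ?_⟩
  · rw [Module.natCard_eq_pow_finrank (K := ZMod p), Nat.card_zmod]
  · rw [Nat.card_congr (AddMonoidHom.toZModLinearMapEquiv p).toEquiv,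
      Module.natCard_linearMap_eq_pow_finrank]

theorem exists_natCard_eq_pow_and_natCard_monoidHom_eq_pow {E W : Type*}
    [CommGroup E] [Finite E] [CommGroup W] [Finite W]
    (hE : ∀ x : E, x ^ p = 1) (hW : ∀ x : W, x ^ p = 1) :
    ∃ d, Nat.card E = p ^ d ∧ Nat.card (E →* W) = Nat.card W ^ d := by
  let _ := AddCommGroup.zmodModule (G := Additive E) hE
  let _ := AddCommGroup.zmodModule (G := Additive W) hW
  rw [Nat.card_congr (MonoidHom.toAdditive (α := E) (β := W))]
  exact ZMod.exists_natCard_eq_pow_and_natCard_addMonoidHom_eq_pow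
    (V := Additive E) (W := Additive W)

end ElementaryAbelian

section SelfDual

variable {Q N : Type*} [CommGroup Q] [CommGroup N]

def kerPowMonoidHomEquiv (n : ℕ) :
    (powMonoidHom n : (Q →* N) →* (Q →* N)).ker ≃
      (Q ⧸ (powMonoidHom n : Q →* Q).range →* (powMonoidHom n : N →* N).ker) where
  toFun f := QuotientGroup.lift _ ((f : Q →* N).codRestrict _ fun q => by
      simpa using DFunLike.congr_fun f.2 q) (by
      rintro _ ⟨q, rfl⟩
      ext
      simpa using DFunLike.congr_fun f.2 q)
  invFun g := ⟨(powMonoidHom n : N →* N).ker.subtype.comp (g.comp (QuotientGroup.mk' _)), by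
      ext q
      have hq := (g q).2
      rw [MonoidHom.mem_ker, powMonoidHom_apply] at hq
      simpa using hq⟩
  left_inv f := by ext; simp
  right_inv g := by ext; simp

theorem card_ker_powMonoidHom_eq_of_mulEquiv_monoidHom {p : ℕ} [Fact p.Prime] [Finite Q]
    [Nontrivial Q] [Finite N] (hQ : IsPGroup p Q) (e : Q ≃* (Q →* N)) :
    Nat.card (powMonoidHom p : N →* N).ker = p := by
  set R := (powMonoidHom p : Q →* Q).range
  set W := (powMonoidHom p : N →* N).ker
  have hE : ∀ x : Q ⧸ R, x ^ p = 1 := fun x => QuotientGroup.induction_on x fun q =>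
    (QuotientGroup.eq_one_iff _).mpr ⟨q, rfl⟩
  have hW : ∀ w : W, w ^ p = 1 := fun w => Subtype.ext w.2
  obtain ⟨d, hQR, hHom⟩ := exists_natCard_eq_pow_and_natCard_monoidHom_eq_pow hE hW
  have key : Nat.card (Q ⧸ R) = Nat.card (Q ⧸ R →* W) :=
    calc Nat.card (Q ⧸ R) = Nat.card (powMonoidHom p : Q →* Q).ker :=
          (MonoidHom.card_ker_eq_index_range _).symm
      _ = Nat.card (powMonoidHom p : (Q →* N) →* (Q →* N)).ker :=
          Nat.card_congr <| e.toEquiv.subtypeEquiv fun q => by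
            simp [MonoidHom.mem_ker, ← map_pow]
      _ = Nat.card (Q ⧸ R →* W) := Nat.card_congr (kerPowMonoidHomEquiv p)
  have hd : d ≠ 0 := by
    rintro rfl
    apply hQ.card_ker_powMonoidHom_ne_one
    rw [MonoidHom.card_ker_eq_index_range, Subgroup.index_eq_card, ← pow_zero p]
    exact hQR
  exact Nat.pow_left_injective hd (hHom.symm.trans (key.symm.trans hQR))

end SelfDual

section CentralAutomorphisms

variable {G : Type*} [Group G]

theorem commutatorElement_mul_right_of_commutator_le_center (h : commutator G ≤ center G)
    (a b c : G) : ⁅a, b * c⁆ = ⁅a, b⁆ * ⁅a, c⁆ := by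
  have hcentral := h (commutator_mem_commutator (mem_top a) (mem_top c))
  rw [commutatorElement_mul_right_eq_mul_conj, mul_assoc _ b, mem_center_iff.mp hcentral b,
    ← mul_assoc, mul_inv_cancel_right]

theorem commutatorElement_mul_left_of_commutator_le_center (h : commutator G ≤ center G)
    (a b c : G) : ⁅a * b, c⁆ = ⁅a, c⁆ * ⁅b, c⁆ := by
  have hcentral : ∀ x y : G, ⁅x, y⁆ ∈ center G :=
    fun x y => h (commutator_mem_commutator (mem_top x) (mem_top y))
  rw [commutatorElement_mul_left_eq_conj_mul, (mem_center_iff.mp (hcentral b c) a),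
    mul_inv_cancel_right, (mem_center_iff.mp (hcentral a c) _)]

theorem commutator_le_of_inv_mul_conj_mem {M : Subgroup G}
    (h : ∀ g x : G, x⁻¹ * MulAut.conj g x ∈ M) : commutator G ≤ M := by
  rw [commutator_def, commutator_le]
  intro a _ b _
  simpa [commutatorElement_def, mul_assoc] using h b a⁻¹

theorem nontrivial_quotient_center_of_not_comm (h : ¬ ∀ a b : G, a * b = b * a) :
    Nontrivial (G ⧸ center G) := by
  refine not_subsingleton_iff_nontrivial.mp fun _ => h fun a b => ?_
  have ha : a ∈ center G := (QuotientGroup.eq_one_iff a).mp (Subsingleton.elim _ _)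
  exact (mem_center_iff.mp ha b).symm

variable {M : Subgroup G}

theorem map_mk_coe_eq_one_of_le_center (hM : M ≤ center G) (f : G ⧸ center G →* M) (m : M) :
    f (m : G) = 1 := by
  rw [(QuotientGroup.eq_one_iff _).mpr (hM m.2), map_one]

def centralAutOfHom (hM : M ≤ center G) (f : G ⧸ center G →* M) : MulAut G where
  toFun x := x * f x
  invFun x := x * (f x)⁻¹
  left_inv x := by simp [map_mk_coe_eq_one_of_le_center hM]
  right_inv x := by simp [map_mk_coe_eq_one_of_le_center hM]
  map_mul' x y := by
    simp only [QuotientGroup.mk_mul, map_mul, coe_mul, mul_assoc,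
      (mem_center_iff.mp (hM (f x).2) _).symm]

theorem centralAutOfHom_apply (hM : M ≤ center G) (f : G ⧸ center G →* M) (x : G) :
    centralAutOfHom hM f x = x * f x := rfl

def commutatorHom (hM : M ≤ center G) (hGM : commutator G ≤ M) [IsMulCommutative M] :
    G →* (G ⧸ center G →* M) where
  toFun g := QuotientGroup.lift (center G)
    { toFun x := ⟨⁅g, x⁆, hGM (commutator_mem_commutator (mem_top g) (mem_top x))⟩
      map_one' := Subtype.ext (commutatorElement_one_right g)
      map_mul' x y := Subtype.ext
        (commutatorElement_mul_right_of_commutator_le_center (hGM.trans hM) g x y) }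
    fun z hz =>
      Subtype.ext (commutatorElement_eq_one_iff_mul_comm.mpr (mem_center_iff.mp hz g))
  map_one' := by ext x; exact commutatorElement_one_left x
  map_mul' g h := by
    ext x
    exact commutatorElement_mul_left_of_commutator_le_center (hGM.trans hM) g h x

theorem commutatorHom_apply (hM : M ≤ center G) (hGM : commutator G ≤ M) [IsMulCommutative M]
    (g x : G) : (commutatorHom hM hGM g x : G) = ⁅g, x⁆ := rfl

theorem ker_commutatorHom (hM : M ≤ center G) (hGM : commutator G ≤ M) [IsMulCommutative M] :
    (commutatorHom hM hGM).ker = center G := by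
  ext g
  simp only [MonoidHom.mem_ker, mem_center_iff, MonoidHom.ext_iff, QuotientGroup.forall_mk,
    MonoidHom.one_apply, Subtype.ext_iff, commutatorHom_apply, OneMemClass.coe_one,
    commutatorElement_eq_one_iff_mul_comm, eq_comm (a := g * _)]

theorem commutatorHom_surjective (hM : M ≤ center G) (hGM : commutator G ≤ M)
    [IsMulCommutative M] (h : ∀ f, ∃ g, MulAut.conj g = centralAutOfHom hM f) :
    Function.Surjective (commutatorHom hM hGM) := by
  intro f
  obtain ⟨g, hg⟩ := h f
  refine ⟨g, QuotientGroup.monoidHom_ext _ (MonoidHom.ext fun x => Subtype.ext ?_)⟩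
  have hx : ⁅g, x⁆ * x = f x * x := by
    rw [← conj_eq_commutatorElement_mul, hg, centralAutOfHom_apply,
      mem_center_iff.mp (hM (f x).2)]
  exact mul_right_cancel hx

end CentralAutomorphisms

/-- If G is a non-abelian finite p-group, M ≤ Z(G), and Aut^M_{Z(G)}(G) = Inn(G),
then G has nilpotency class 2, γ₂(G) ≤ M, and M is cyclic. -/
theorem stmt6 {p : ℕ} [Fact p.Prime] {G : Type*} [Group G] [Finite G]
    (hp : IsPGroup p G) (hna : ¬ ∀ a b : G, a * b = b * a)
    (M : Subgroup G) (hM : M ≤ Subgroup.center G)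
    (h : {α : MulAut G | (∀ x : G, x⁻¹ * α x ∈ M) ∧ ∀ z ∈ Subgroup.center G, α z = z}
        = Set.range (fun g : G => MulAut.conj g)) :
    commutator G ≤ Subgroup.center G ∧ commutator G ≤ M ∧ IsCyclic ↥M := by
  have hinn : ∀ g x : G, x⁻¹ * MulAut.conj g x ∈ M := fun g x =>
    (h.superset ⟨g, rfl⟩).1 x
  have hGM := commutator_le_of_inv_mul_conj_mem hinn
  refine ⟨hGM.trans hM, hGM, ?_⟩
  have : IsMulCommutative M := .of_setLike_mul_comm fun a _ b hb => mem_center_iff.mp (hM hb) a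
  have : IsMulCommutative (G ⧸ center G) :=
    Normal.quotient_commutative_iff_commutator_le.mpr (hGM.trans hM)
  have := nontrivial_quotient_center_of_not_comm hna
  have hsurj := commutatorHom_surjective hM hGM fun f =>
    h.subset ⟨fun x => by simp [centralAutOfHom_apply], fun z hz => by
      simp [centralAutOfHom_apply, (QuotientGroup.eq_one_iff z).mpr hz]⟩
  exact (hp.to_subgroup M).isCyclic_of_card_ker_powMonoidHom_le
    (card_ker_powMonoidHom_eq_of_mulEquiv_monoidHom (hp.to_quotient (center G))
      (QuotientGroup.liftEquiv _ hsurj (ker_commutatorHom hM hGM).symm)).le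
end

section
/- Let G be a non-abelian finite p-group and M a central subgroup of G. If G has nilpotency class 2, γ₂(G) ≤ M, and M is cyclic, then Aut^M_{Z(G)}(G) = Inn(G). -/
/-!
Every `α ∈ Aut^M_{Z(G)}(G)` is determined by the map `x ↦ x⁻¹ α(x)`, which for central `M` is a
homomorphism `G ⧸ Z(G) →* M`. The quotient `G ⧸ Z(G)` is abelian because `γ₂(G) ≤ M ≤ Z(G)`, and
embedding the cyclic group `M` into `ℂˣ` bounds the number of such homomorphisms by the number
`|G ⧸ Z(G)| = |Inn(G)|` of complex characters. Since `Inn(G) ⊆ Aut^M_{Z(G)}(G)`, the two coincide.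
-/

open Subgroup
open scoped commutatorElement IsMulCommutative

theorem IsCyclic.card_monoidHom_le (A C : Type*) [CommGroup A] [Finite A] [Group C]
    [Finite C] [IsCyclic C] : Nat.card (A →* C) ≤ Nat.card A := by
  have : NeZero (Nat.card C) := ⟨Nat.card_pos.ne'⟩
  let ι : C →* ℂˣ := (rootsOfUnity (Nat.card C) ℂ).subtype.comp
    (mulEquivOfCyclicCardEq (HasEnoughRootsOfUnity.natCard_rootsOfUnity ℂ _).symm).toMonoidHom
  have hι : Function.Injective ι := Subtype.val_injective.comp (MulEquiv.injective _)
  calc Nat.card (A →* C) ≤ Nat.card (A →* ℂˣ) :=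
        Nat.card_le_card_of_injective (ι.comp ·) fun _ _ ↦ (MonoidHom.cancel_left hι).mp
    _ = Nat.card A := CommGroup.card_monoidHom_of_hasEnoughRootsOfUnity A ℂ

section

variable {G : Type*} [Group G]

theorem MulAut.ker_conj : (MulAut.conj : G →* MulAut G).ker = center G := by
  ext g
  simp only [MonoidHom.mem_ker, mem_center_iff, MulEquiv.ext_iff, MulAut.conj_apply,
    MulAut.one_apply, mul_inv_eq_iff_eq_mul]
  exact forall_congr' fun _ ↦ eq_comm

theorem MulAut.card_range_conj :
    Nat.card (Set.range (MulAut.conj : G →* MulAut G)) = Nat.card (G ⧸ center G) :=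
  Nat.card_congr ((QuotientGroup.quotientMulEquivOfEq MulAut.ker_conj.symm).trans
    (QuotientGroup.quotientKerEquivRange _)).toEquiv.symm

-- `Aut^M_{Z(G)}(G)` in the notation of the paper.
def centralAutsFixingCenter (M : Subgroup G) : Set (MulAut G) :=
  {α | (∀ x : G, x⁻¹ * α x ∈ M) ∧ ∀ z ∈ center G, α z = z}

variable {M : Subgroup G}

theorem range_conj_subset_centralAutsFixingCenter (hM : commutator G ≤ M) :
    Set.range (MulAut.conj : G →* MulAut G) ⊆ centralAutsFixingCenter M := by
  rintro _ ⟨g, rfl⟩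
  refine ⟨fun x ↦ ?_, fun z hz ↦ ?_⟩
  · have : x⁻¹ * MulAut.conj g x = ⁅x⁻¹, g⁆ := by
      rw [MulAut.conj_apply, commutatorElement_def, inv_inv]; group
    exact this ▸ hM (commutator_mem_commutator (mem_top _) (mem_top _))
  · rw [MulAut.conj_apply, mem_center_iff.mp hz g, mul_inv_cancel_right]

namespace centralAutsFixingCenter

def toHom (hM : M ≤ center G) (α : centralAutsFixingCenter M) : G ⧸ center G →* M :=
  QuotientGroup.lift (center G)
    { toFun x := ⟨x⁻¹ * α.1 x, α.2.1 x⟩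
      map_one' := by ext; simp
      map_mul' x y := by
        ext
        have hcomm := mem_center_iff.mp (hM (α.2.1 x)) y⁻¹
        calc (x * y)⁻¹ * α.1 (x * y) = y⁻¹ * (x⁻¹ * α.1 x) * α.1 y := by
              rw [map_mul, mul_inv_rev]; group
          _ = (x⁻¹ * α.1 x) * (y⁻¹ * α.1 y) := by rw [hcomm, mul_assoc] }
    fun z hz ↦ by ext; simp [α.2.2 z hz]

theorem toHom_mk (hM : M ≤ center G) (α : centralAutsFixingCenter M) (x : G) :
    (toHom hM α x : G) = x⁻¹ * α.1 x :=
  rfl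

theorem toHom_injective (hM : M ≤ center G) : Function.Injective (toHom hM) := fun α β h ↦
  Subtype.ext <| MulEquiv.ext fun x ↦ mul_left_cancel <|
    (toHom_mk hM α x).symm.trans <| (congrArg (fun f ↦ (f x : G)) h).trans (toHom_mk hM β x)

end centralAutsFixingCenter

end

theorem stmt7_general {G : Type*} [Group G] [Finite G]
    (M : Subgroup G) (hM : M ≤ Subgroup.center G)
    (hγ : commutator G ≤ M) (hcyc : IsCyclic ↥M) :
    {α : MulAut G | (∀ x : G, x⁻¹ * α x ∈ M) ∧ ∀ z ∈ Subgroup.center G, α z = z}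
      = Set.range (fun g : G => MulAut.conj g) := by
  have : IsMulCommutative (G ⧸ center G) :=
    Subgroup.Normal.quotient_commutative_iff_commutator_le.mpr (hγ.trans hM)
  have : Finite (G ⧸ center G →* M) := Finite.of_injective _ DFunLike.coe_injective
  refine (Set.eq_of_subset_of_ncard_le (range_conj_subset_centralAutsFixingCenter hγ) ?_
    (Set.toFinite _)).symm
  calc (centralAutsFixingCenter M).ncard
      ≤ Nat.card (G ⧸ center G →* M) :=
        Nat.card_le_card_of_injective _ (centralAutsFixingCenter.toHom_injective hM)
    _ ≤ Nat.card (G ⧸ center G) := IsCyclic.card_monoidHom_le _ _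
    _ = (Set.range (MulAut.conj : G →* MulAut G)).ncard := MulAut.card_range_conj.symm

/-- If G is a non-abelian finite p-group of class 2, M ≤ Z(G) with γ₂(G) ≤ M and M
cyclic, then Aut^M_{Z(G)}(G) = Inn(G). -/
theorem stmt7 {p : ℕ} [Fact p.Prime] {G : Type*} [Group G] [Finite G]
    (hp : IsPGroup p G) (hna : ¬ ∀ a b : G, a * b = b * a)
    (M : Subgroup G) (hM : M ≤ Subgroup.center G)
    (h2 : commutator G ≤ Subgroup.center G)
    (hγ : commutator G ≤ M) (hcyc : IsCyclic ↥M) :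
    {α : MulAut G | (∀ x : G, x⁻¹ * α x ∈ M) ∧ ∀ z ∈ Subgroup.center G, α z = z}
      = Set.range (fun g : G => MulAut.conj g) :=
  stmt7_general M hM hγ hcyc
end

section
/- Let A and B be finite abelian p-groups with cyclic decompositions A = C_{p^{a₁}} × ⋯ × C_{p^{a_s}} (a₁ ≥ ⋯ ≥ a_s > 0) and B = C_{p^{b₁}} × ⋯ × C_{p^{b_s}} (b₁ ≥ ⋯ ≥ b_s > 0), with b_j ≥ a_j for all j and b_j > a_j for some j. Let t be the smallest index in {1,…,s} such that a_j = b_j for all j with t+1 ≤ j ≤ s. Then for any finite abelian p-group C, |Hom(A, C)| < |Hom(B, C)| if and only if the exponent of C is at least p^{a_t + 1}. -/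
/-!
Homomorphisms out of a product of cyclic groups are tuples of homomorphisms out of the factors,
and a homomorphism `C_{p^m} → C` is an element of `C` killed by `p ^ m`. Hence
`|Hom(A, C)| = ∏ i, N(a i)` with `N m = |{c ∈ C | c ^ p ^ m = 1}|`, and likewise for `B`.
`N` is monotone, and `N m < N m'` for `m < m'` exactly when `C` has an element of order `p ^ (m + 1)`,
i.e. when `p ^ (m + 1) ≤ exp C`. So `|Hom(A, C)| < |Hom(B, C)|` iff `p ^ (a i + 1) ≤ exp C` for some
`i` with `a i < b i`; all such `i` are `≤ t`, `a` is antitone, and `a t < b t` by minimality of `t`.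
-/

theorem Nat.card_monoidHom_multiplicative_zmod (n : ℕ) (C : Type*) [CommGroup C] :
    Nat.card (Multiplicative (ZMod n) →* C) = Nat.card {c : C // c ^ n = 1} :=
  Nat.card_congr <| MonoidHom.toAdditiveRight.trans <| (ZMod.lift n).symm.trans <|
    ((zmultiplesHom (Additive C)).subtypeEquiv fun x => by
      simp
      rfl).symm

theorem Nat.card_monoidHom_pi_multiplicative_zmod {ι : Type*} [Fintype ι] (n : ι → ℕ)
    (C : Type*) [CommGroup C] :
    Nat.card ((∀ i, Multiplicative (ZMod (n i))) →* C) = ∏ i, Nat.card {c : C // c ^ n i = 1} := by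
  classical
  rw [Nat.card_congr (Pi.monoidHomMulEquiv _ C).toEquiv, Nat.card_pi]
  exact Finset.prod_congr rfl fun i _ => Nat.card_monoidHom_multiplicative_zmod (n i) C

theorem Finset.prod_lt_prod_iff_exists_lt {ι R : Type*} [CommSemiring R] [LinearOrder R]
    [IsStrictOrderedRing R] {s : Finset ι} {f g : ι → R} (hf : ∀ i ∈ s, 0 < f i)
    (hfg : ∀ i ∈ s, f i ≤ g i) :
    ∏ i ∈ s, f i < ∏ i ∈ s, g i ↔ ∃ i ∈ s, f i < g i := by
  refine ⟨fun h => ?_, Finset.prod_lt_prod hf hfg⟩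
  contrapose! h
  exact Finset.prod_le_prod (fun i hi => (hf i hi).le.trans (hfg i hi)) h

theorem ne_of_isLeast_forall_lt_eq {ι α : Type*} [LinearOrder ι] [PredOrder ι] {f g : ι → α}
    {t : ι} (ht : ∀ j, t < j → f j = g j) (ht_min : ∀ t', (∀ j, t' < j → f j = g j) → t ≤ t')
    (hne : ∃ i, f i ≠ g i) : f t ≠ g t := by
  intro heq
  have hge : ∀ j, t ≤ j → f j = g j := fun j hj =>
    hj.eq_or_lt.elim (fun h => h ▸ heq) (ht j)
  by_cases hmin : IsMin t
  · obtain ⟨i, hi⟩ := hne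
    exact hi (hge i (le_of_not_gt hmin.not_lt))
  · have := ht_min (Order.pred t) fun j hj => hge j ((Order.pred_lt_iff_of_not_isMin hmin).1 hj)
    exact (Order.pred_lt_of_not_isMin hmin).not_ge this

theorem setOf_pow_eq_one_subset_of_dvd {M : Type*} [Monoid M] {n n' : ℕ} (h : n ∣ n') :
    {c : M | c ^ n = 1} ⊆ {c | c ^ n' = 1} := fun _ hc =>
  orderOf_dvd_iff_pow_eq_one.1 ((orderOf_dvd_of_pow_eq_one hc).trans h)

theorem Nat.card_pow_eq_one_le_of_dvd {M : Type*} [Monoid M] [Finite M] {n n' : ℕ} (h : n ∣ n') :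
    Nat.card {c : M // c ^ n = 1} ≤ Nat.card {c : M // c ^ n' = 1} :=
  Nat.card_mono (Set.toFinite _) (setOf_pow_eq_one_subset_of_dvd h)

section PGroup

variable {p : ℕ} [hp : Fact p.Prime] {C : Type*}

theorem pow_prime_pow_eq_one_iff_of_orderOf_eq [Monoid C] {c : C} {k m : ℕ}
    (hc : orderOf c = p ^ k) : c ^ p ^ m = 1 ↔ k ≤ m := by
  rw [← orderOf_dvd_iff_pow_eq_one, hc, Nat.pow_dvd_pow_iff_le_right hp.out.one_lt]

variable [CommGroup C] [Finite C]

theorem IsPGroup.exists_orderOf_eq_pow_of_le_exponent (hC : IsPGroup p C) {k : ℕ}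
    (hk : p ^ k ≤ Monoid.exponent C) : ∃ c : C, orderOf c = p ^ k := by
  obtain ⟨g, hg⟩ := Monoid.exists_orderOf_eq_exponent (Monoid.ExponentExists.of_finite (G := C))
  obtain ⟨e, he⟩ := hC.exists_orderOf_eq_pow g
  have hke : k ≤ e := (Nat.pow_le_pow_iff_right hp.out.one_lt).1 (he ▸ hg ▸ hk)
  refine ⟨g ^ p ^ (e - k), ?_⟩
  rw [orderOf_pow_of_dvd (pow_ne_zero _ hp.out.ne_zero) (he ▸ pow_dvd_pow p (Nat.sub_le e k)), he,
    Nat.pow_div (Nat.sub_le e k) hp.out.pos, Nat.sub_sub_self hke]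

theorem IsPGroup.card_pow_eq_one_lt_iff (hC : IsPGroup p C) {m m' : ℕ} (hmm' : m ≤ m') :
    Nat.card {c : C // c ^ p ^ m = 1} < Nat.card {c : C // c ^ p ^ m' = 1} ↔
      m < m' ∧ p ^ (m + 1) ≤ Monoid.exponent C := by
  have hsub := setOf_pow_eq_one_subset_of_dvd (M := C) (pow_dvd_pow p hmm')
  have hcard : Set.ncard {c : C | c ^ p ^ m = 1} < Set.ncard {c : C | c ^ p ^ m' = 1} ↔
      {c : C | c ^ p ^ m = 1} ⊂ {c : C | c ^ p ^ m' = 1} :=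
    ⟨fun h => hsub.ssubset_of_ne fun heq => h.ne (congrArg _ heq), fun h => Set.ncard_lt_ncard h⟩
  rw [← Nat.card_coe_set_eq, ← Nat.card_coe_set_eq] at hcard
  refine (hcard.trans (Set.ssubset_iff_of_subset hsub)).trans ⟨?_, ?_⟩
  · rintro ⟨c, hc', hc⟩
    obtain ⟨k, hk⟩ := hC.exists_orderOf_eq_pow c
    rw [Set.mem_ofPred_eq, pow_prime_pow_eq_one_iff_of_orderOf_eq hk] at hc hc'
    refine ⟨by omega, ?_⟩
    calc p ^ (m + 1) ≤ p ^ k := Nat.pow_le_pow_right hp.out.pos (by omega)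
      _ = orderOf c := hk.symm
      _ ≤ Monoid.exponent C := Nat.le_of_dvd (Nat.pos_of_neZero _) (Monoid.order_dvd_exponent c)
  · rintro ⟨hlt, hexp⟩
    obtain ⟨c, hc⟩ := hC.exists_orderOf_eq_pow_of_le_exponent hexp
    refine ⟨c, ?_, ?_⟩ <;>
      simp only [Set.mem_ofPred_eq, pow_prime_pow_eq_one_iff_of_orderOf_eq hc] <;> omega

end PGroup

theorem stmt11_general {p : ℕ} [Fact p.Prime] {s : ℕ}
    (a b : Fin s → ℕ)
    (ha_anti : ∀ i j : Fin s, i ≤ j → a j ≤ a i)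
    (hba : ∀ i, a i ≤ b i) (hlt : ∃ i, a i < b i)
    (t : Fin s)
    (ht : ∀ j, t < j → a j = b j)
    (ht_min : ∀ t' : Fin s, (∀ j, t' < j → a j = b j) → t ≤ t')
    (C : Type*) [CommGroup C] [Finite C] (hC : IsPGroup p C) :
    Nat.card ((∀ i, Multiplicative (ZMod (p ^ a i))) →* C) <
        Nat.card ((∀ i, Multiplicative (ZMod (p ^ b i))) →* C) ↔
      p ^ (a t + 1) ≤ Monoid.exponent C := by
  have hat : a t < b t := (hba t).lt_of_ne <|
    ne_of_isLeast_forall_lt_eq ht ht_min (hlt.imp fun _ => Nat.ne_of_lt)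
  rw [Nat.card_monoidHom_pi_multiplicative_zmod, Nat.card_monoidHom_pi_multiplicative_zmod,
    Finset.prod_lt_prod_iff_exists_lt (fun _ _ => Nat.card_pos_iff.2 ⟨⟨⟨1, one_pow _⟩⟩, inferInstance⟩)
      (fun i _ => Nat.card_pow_eq_one_le_of_dvd (pow_dvd_pow p (hba i)))]
  simp only [Finset.mem_univ, true_and, hC.card_pow_eq_one_lt_iff (hba _)]
  refine ⟨fun ⟨i, hi, hexp⟩ => le_trans ?_ hexp, fun hexp => ⟨t, hat, hexp⟩⟩
  have hit : i ≤ t := le_of_not_gt fun h => hi.ne (ht i h)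
  exact Nat.pow_le_pow_right (Fact.out : p.Prime).pos (by have := ha_anti i t hit; omega)

/-- Lemma on counting homomorphisms between finite abelian p-groups: with
A = Π C_{p^{a_i}}, B = Π C_{p^{b_i}}, a_i ≤ b_i with strict inequality somewhere,
and t the least index with a_j = b_j for all j > t, we have |Hom(A,C)| < |Hom(B,C)|
iff the exponent of C is at least p^{a_t + 1}. -/
theorem stmt11 {p : ℕ} [Fact p.Prime] {s : ℕ}
    (a b : Fin s → ℕ)
    (ha_pos : ∀ i, 0 < a i) (hb_pos : ∀ i, 0 < b i)
    (ha_anti : ∀ i j : Fin s, i ≤ j → a j ≤ a i)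
    (hb_anti : ∀ i j : Fin s, i ≤ j → b j ≤ b i)
    (hba : ∀ i, a i ≤ b i) (hlt : ∃ i, a i < b i)
    (t : Fin s)
    (ht : ∀ j, t < j → a j = b j)
    (ht_min : ∀ t' : Fin s, (∀ j, t' < j → a j = b j) → t ≤ t')
    (C : Type*) [CommGroup C] [Finite C] (hC : IsPGroup p C) :
    Nat.card ((∀ i, Multiplicative (ZMod (p ^ a i))) →* C) <
        Nat.card ((∀ i, Multiplicative (ZMod (p ^ b i))) →* C) ↔
      p ^ (a t + 1) ≤ Monoid.exponent C :=
  stmt11_general a b ha_anti hba hlt t ht ht_min C hC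
end

section
/- Let G be a finite p-group of nilpotency class 2 such that the rank of G/Z(G) is strictly less than the rank of G/γ₂(G). Then every central automorphism group inclusion Aut^{Z(G)}_{Z(G)}(G) ⊆ Autcent(G) is strict, i.e., there exists a central automorphism of G not fixing Z(G) element-wise. -/
/-!
Since `rank (G ⧸ G') ≤ rank G` and the Frattini subgroup is non-generating, the hypothesis
`rank (G ⧸ Z(G)) < rank (G ⧸ G')` forces `Z(G) ⊄ Φ(G)`: some maximal subgroup `M` misses a
central element `z`. Then `G = M Z(G)`, so `M` is normal and `G ⧸ M` is cyclic, generated by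
`z M`; in particular `G' ≤ M`. Sending `z M` to a central element `w ∈ G'` of order `p` gives
`f : G →* Z(G)` with `M ≤ ker f` and image in `G' ≤ M`, so `f ∘ f = 1`, and `x ↦ x f(x)` is a
central automorphism moving `z` to `z w`.
-/

section

open Subgroup

variable {G : Type*} [Group G]

namespace MonoidHom

def centralMulAut (f : G →* center G) (hf : ∀ x, f (f x) = 1) : MulAut G where
  toFun x := x * f x
  invFun x := x * (f x)⁻¹
  left_inv x := by simp [hf]
  right_inv x := by simp [hf]
  map_mul' x y := by
    simp only [map_mul, coe_mul]
    rw [mul_assoc x, ← mul_assoc y, mem_center_iff.mp (f x).2 y]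
    group

@[simp]
lemma centralMulAut_apply (f : G →* center G) (hf : ∀ x, f (f x) = 1) (x : G) :
    f.centralMulAut hf x = x * f x :=
  rfl

end MonoidHom

lemma IsPGroup.exists_mem_orderOf_eq_prime {p : ℕ} [Fact p.Prime] (hp : IsPGroup p G)
    {H : Subgroup G} (hH : H ≠ ⊥) : ∃ w ∈ H, orderOf w = p := by
  obtain ⟨v, hvH, hv⟩ := H.bot_or_exists_ne_one.resolve_left hH
  obtain ⟨k, hk⟩ := hp.exists_orderOf_eq_pow v
  exact ⟨v ^ (orderOf v / p), H.pow_mem hvH _,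
    orderOf_pow_orderOf_div (hk ▸ pow_ne_zero _ (Fact.out : p.Prime).ne_zero) (hp.dvd_orderOf hv)⟩

lemma Subgroup.normal_of_sup_center_eq_top {M : Subgroup G} (h : M ⊔ center G = ⊤) :
    M.Normal :=
  normalizer_eq_top_iff.mp <| top_unique <|
    h ▸ sup_le le_normalizer (center_le_normalizer _)

lemma Group.rank_le_rank_quotient_of_le_frattini [Finite G] {N : Subgroup G} [N.Normal]
    (hN : N ≤ frattini G) : Group.rank G ≤ Group.rank (G ⧸ N) := by
  classical
  obtain ⟨S, hS, hgen⟩ := Group.rank_spec (G ⧸ N)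
  let T : Finset G := S.image Quotient.out
  have hT : closure (T : Set G) ⊔ N = ⊤ := by
    have hmap : (closure (T : Set G)).map (QuotientGroup.mk' N) = ⊤ := by
      rw [MonoidHom.map_closure, ← hgen]
      congr 1
      ext q
      simp [T]
    rw [sup_comm, ← QuotientGroup.comap_map_mk', hmap, comap_top]
  calc Group.rank G ≤ T.card :=
        Group.rank_le (frattini_nongenerating (top_unique (hT ▸ sup_le_sup_left hN _)))
    _ ≤ S.card := Finset.card_image_le
    _ = _ := hS

lemma exists_isCoatom_not_le_of_rank_quotient_lt [Finite G] {N : Subgroup G} [N.Normal]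
    (h : Group.rank (G ⧸ N) < Group.rank G) : ∃ M : Subgroup G, IsCoatom M ∧ ¬ N ≤ M := by
  by_contra! hN
  exact (Group.rank_le_rank_quotient_of_le_frattini (le_iInf₂ hN)).not_gt h

lemma QuotientGroup.mem_zpowers_mk_of_isCoatom {M : Subgroup G} [M.Normal] (hM : IsCoatom M)
    {z : G} (hz : z ∉ M) (q : G ⧸ M) : q ∈ zpowers (z : G ⧸ M) := by
  have hlt : M < (zpowers (z : G ⧸ M)).comap (QuotientGroup.mk' M) :=
    lt_of_le_of_ne (QuotientGroup.le_comap_mk' M _) fun h ↦ hz (h ▸ mem_zpowers (z : G ⧸ M))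
  obtain ⟨x, rfl⟩ := QuotientGroup.mk_surjective q
  have hx : x ∈ (zpowers (z : G ⧸ M)).comap (QuotientGroup.mk' M) := hM.2 _ hlt ▸ mem_top x
  exact hx

lemma exists_monoidHom_center_of_isCoatom {M : Subgroup G} [M.Normal] (hM : IsCoatom M)
    {z w : G} (hz : z ∉ M) (hwZ : w ∈ center G) (hwM : w ∈ M)
    (hw : orderOf w ∣ orderOf (z : G ⧸ M)) :
    ∃ f : G →* center G, (∀ x, f (f x) = 1) ∧ (f z : G) = w := by
  have hgen := QuotientGroup.mem_zpowers_mk_of_isCoatom hM hz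
  let ψ : G ⧸ M →* center G :=
    monoidHomOfForallMemZpowers hgen (g' := ⟨w, hwZ⟩) (by rwa [Subgroup.orderOf_mk])
  refine ⟨ψ.comp (QuotientGroup.mk' M), fun x ↦ ?_, by simp [ψ]⟩
  obtain ⟨k, hk⟩ := mem_zpowers_iff.mp (hgen x)
  have hfx : (ψ x : G) = w ^ k := by simp [ψ, ← hk]
  simp [hfx, (QuotientGroup.eq_one_iff _).mpr (zpow_mem hwM k)]

end

/-- If G is a finite p-group of class 2 with rank(G/Z(G)) < rank(G/γ₂(G)), then
there is a central automorphism of G not fixing Z(G) element-wise. -/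
theorem stmt14 {p : ℕ} [Fact p.Prime] {G : Type*} [Group G] [Finite G]
    (hp : IsPGroup p G)
    (h2 : commutator G ≤ Subgroup.center G) (hna : commutator G ≠ ⊥)
    (hrank : Group.rank (G ⧸ Subgroup.center G) < Group.rank (G ⧸ commutator G)) :
    ∃ α : MulAut G, (∀ x : G, x⁻¹ * α x ∈ Subgroup.center G) ∧
      ∃ z ∈ Subgroup.center G, α z ≠ z := by
  obtain ⟨M, hM, hZM⟩ := exists_isCoatom_not_le_of_rank_quotient_lt
    (hrank.trans_le (Group.rank_le_of_surjective _ (QuotientGroup.mk'_surjective _)))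
  obtain ⟨z, hzZ, hzM⟩ := Set.not_subset.mp hZM
  have : M.Normal := Subgroup.normal_of_sup_center_eq_top (hM.2 _ (left_lt_sup.mpr hZM))
  have hG'M : commutator G ≤ M := by
    have : IsCyclic (G ⧸ M) := ⟨_, QuotientGroup.mem_zpowers_mk_of_isCoatom hM hzM⟩
    let := IsCyclic.commGroup (α := G ⧸ M)
    simpa using Abelianization.commutator_subset_ker (QuotientGroup.mk' M)
  obtain ⟨w, hwG', hw⟩ := hp.exists_mem_orderOf_eq_prime hna
  obtain ⟨f, hff, hfz⟩ := exists_monoidHom_center_of_isCoatom hM hzM (h2 hwG') (hG'M hwG')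
    (hw ▸ (hp.to_quotient M).dvd_orderOf (by simpa [QuotientGroup.eq_one_iff] using hzM))
  have hw1 : w ≠ 1 := fun h ↦ (Fact.out : p.Prime).ne_one (hw ▸ orderOf_eq_one_iff.mpr h)
  refine ⟨f.centralMulAut hff, fun x ↦ by simp, z, hzZ, ?_⟩
  simpa [hfz] using hw1
end

section
/- Let G be a finite p-group of nilpotency class 2. Write G/Z(G) = C_{p^{a₁}} × ⋯ × C_{p^{a_r}} and G/γ₂(G) = C_{p^{b₁}} × ⋯ × C_{p^{b_s}} with a₁ ≥ ⋯ ≥ a_r > 0 and b₁ ≥ ⋯ ≥ b_s > 0. Let p^c be the common exponent of G/Z(G) and γ₂(G), let k be the largest index with a₁ = ⋯ = a_k = c, let M̄ = C_{p^{a₁}} × ⋯ × C_{p^{a_k}} and N̄ = C_{p^{b₁}} × ⋯ × C_{p^{b_k}}. Then every central automorphism of G fixes Z(G) element-wise if and only if r = s, (G/Z(G))/M̄ ≅ (G/γ₂(G))/N̄, and the exponents of Z(G) and γ₂(G) are equal. -/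
/-!
Let `H = G^{p^c} γ₂(G)`; it lies in `Z(G)`. For a central automorphism `α`, the map
`x ↦ x⁻¹ α(x)` is a homomorphism `G → Z(G)`, which kills `H` once `exp Z(G) = p^c`; so if also
`Z(G) ≤ H`, every central automorphism fixes `Z(G)`. Conversely, given a central `w` of order `N`
and a character `χ : G → ℤ/N` with `1 + χ(w)` a unit, `x ↦ x w^{χ(x)}` is a central automorphism
moving every `z` with `χ(z) ≠ 0`. Taking `w ∈ γ₂(G)` of order `p^c` (so `χ(w) = 0`) shows that
`Z(G) ≤ H` is necessary; taking `w ∈ Z(G)` of order `exp Z(G) = p^d > p^c` (then `χ(w)` is a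
`p^c`-th power because `w ∈ H`, hence nilpotent) shows that `exp Z(G) = p^c` is necessary.

The condition `Z(G) ≤ H` is a comparison of indices: `|G : Z(G)| = p^{∑ aᵢ}` and
`|G : H| = |B : B^{p^c}| = p^{∑ min(bⱼ, c)}` with `B = G/γ₂(G)`. As `G/Z(G)` is a quotient of `B`,
counting `|A^{p^m} : A^{p^{m+1}}| = p^{#{i | m < aᵢ}}` gives `r ≤ s` and `aᵢ ≤ bᵢ`; together with
`aᵢ ≤ c` the equality of the two sums says exactly that `r = s` and `aᵢ = bᵢ` for `i ≥ k`.
-/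

open Subgroup Function
open scoped IsMulCommutative

section Surjective

variable {M N : Type*} [CommGroup M] [CommGroup N] {f : M →* N}

lemma map_range_powMonoidHom_of_surjective (hf : Surjective f) (n : ℕ) :
    (powMonoidHom n : M →* M).range.map f = (powMonoidHom n : N →* N).range := by
  have H : f.comp (powMonoidHom n) = (powMonoidHom n).comp f := by ext : 1; simp
  rw [MonoidHom.map_range, H, MonoidHom.range_comp, MonoidHom.range_eq_top_of_surjective f hf,
    ← MonoidHom.range_eq_map]

lemma index_range_powMonoidHom_dvd_of_surjective (hf : Surjective f) (n : ℕ) :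
    (powMonoidHom n : N →* N).range.index ∣ (powMonoidHom n : M →* M).range.index :=
  map_range_powMonoidHom_of_surjective hf n ▸ index_map_dvd _ hf

lemma relIndex_range_powMonoidHom_mul (n q : ℕ) :
    (powMonoidHom (n * q) : M →* M).range.relIndex (powMonoidHom n).range =
      (powMonoidHom q : (powMonoidHom n : M →* M).range →* _).range.index := by
  rw [relIndex, ← subgroupOf_map_powMonoidHom_eq_range, MonoidHom.map_range]
  congr 3
  ext x
  simp [pow_mul]

lemma relIndex_range_powMonoidHom_dvd_of_surjective (hf : Surjective f) (n q : ℕ) :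
    (powMonoidHom (n * q) : N →* N).range.relIndex (powMonoidHom n).range ∣
      (powMonoidHom (n * q) : M →* M).range.relIndex (powMonoidHom n).range := by
  have hmap := map_range_powMonoidHom_of_surjective hf n
  let g : (powMonoidHom n : M →* M).range →* (powMonoidHom n : N →* N).range :=
    (f.comp (Subgroup.subtype _)).codRestrict _ fun x => hmap ▸ mem_map_of_mem f x.2
  have hg : Surjective g := by
    rintro ⟨y, hy⟩
    obtain ⟨x, hx, rfl⟩ := (hmap ▸ hy : y ∈ (powMonoidHom n : M →* M).range.map f)
    exact ⟨⟨x, hx⟩, rfl⟩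
  rw [relIndex_range_powMonoidHom_mul n q, relIndex_range_powMonoidHom_mul n q]
  exact index_range_powMonoidHom_dvd_of_surjective hg q

end Surjective

lemma dvd_exponent_pi_zmod {ι : Type*} (n : ι → ℕ) (i : ι) :
    n i ∣ Monoid.exponent (∀ i, Multiplicative (ZMod (n i))) := by
  classical
  have := Monoid.order_dvd_exponent
    (Pi.mulSingle (M := fun i => Multiplicative (ZMod (n i))) i (.ofAdd 1))
  simpa only [orderOf_piMulSingle, orderOf_ofAdd_eq_addOrderOf, ZMod.addOrderOf_one] using this

lemma sum_min_succ {ι : Type*} [Fintype ι] (e : ι → ℕ) (m : ℕ) :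
    ∑ i, min (e i) (m + 1) = ∑ i, min (e i) m + (Finset.univ.filter fun i => m < e i).card := by
  rw [Finset.card_filter, ← Finset.sum_add_distrib]
  refine Finset.sum_congr rfl fun i _ => ?_
  split_ifs <;> omega

section PiZModPow

variable {p : ℕ} [Fact p.Prime] {ι : Type*} [Fintype ι]

lemma card_pi_zmod_pow (e : ι → ℕ) :
    Nat.card (∀ i, Multiplicative (ZMod (p ^ e i))) = p ^ ∑ i, e i := by
  simp [Nat.card_pi, Finset.prod_pow_eq_pow_sum]

lemma index_range_powMonoidHom_pi_zmod_pow (e : ι → ℕ) (m : ℕ) :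
    (powMonoidHom (p ^ m) : (∀ i, Multiplicative (ZMod (p ^ e i))) →* _).range.index =
      p ^ ∑ i, min (e i) m := by
  rw [index, Nat.card_congr (QuotientGroup.mulEquivPiModRangePowMonoidHom _ _).toEquiv,
    Nat.card_pi, ← Finset.prod_pow_eq_pow_sum]
  refine Finset.prod_congr rfl fun i _ => ?_
  have : NeZero (p ^ e i) := ⟨pow_ne_zero _ (Fact.out : p.Prime).ne_zero⟩
  rw [← index, IsCyclic.index_powMonoidHom_range, Nat.card_congr Multiplicative.toAdd,
    Nat.card_zmod]
  rcases le_total (e i) m with h | h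
  · rw [min_eq_left h, Nat.gcd_eq_left (pow_dvd_pow p h)]
  · rw [min_eq_right h, Nat.gcd_eq_right (pow_dvd_pow p h)]

lemma relIndex_range_powMonoidHom_pi_zmod_pow (e : ι → ℕ) (m : ℕ) :
    (powMonoidHom (p ^ m * p) : (∀ i, Multiplicative (ZMod (p ^ e i))) →* _).range.relIndex
        (powMonoidHom (p ^ m)).range = p ^ (Finset.univ.filter fun i => m < e i).card := by
  have hle : (powMonoidHom (p ^ m * p) : (∀ i, Multiplicative (ZMod (p ^ e i))) →* _).range ≤
      (powMonoidHom (p ^ m)).range := by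
    rintro _ ⟨x, rfl⟩
    exact ⟨x ^ p, by simp [← pow_mul, mul_comm]⟩
  have h := relIndex_mul_index hle
  rw [index_range_powMonoidHom_pi_zmod_pow, ← pow_succ, index_range_powMonoidHom_pi_zmod_pow,
    sum_min_succ, pow_add p (∑ i, min (e i) m), mul_comm, pow_succ p m] at h
  exact Nat.eq_of_mul_eq_mul_left (pow_pos (Fact.out : p.Prime).pos _) h

lemma card_filter_lt_le_of_surjective {κ : Type*} [Fintype κ] {a : ι → ℕ} {b : κ → ℕ}
    {Ψ : (∀ j, Multiplicative (ZMod (p ^ b j))) →* ∀ i, Multiplicative (ZMod (p ^ a i))}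
    (hΨ : Surjective Ψ) (m : ℕ) :
    (Finset.univ.filter fun i => m < a i).card ≤ (Finset.univ.filter fun j => m < b j).card := by
  have h := relIndex_range_powMonoidHom_dvd_of_surjective hΨ (p ^ m) p
  rw [relIndex_range_powMonoidHom_pi_zmod_pow, relIndex_range_powMonoidHom_pi_zmod_pow] at h
  exact (Nat.pow_dvd_pow_iff_le_right (Fact.out : p.Prime).one_lt).mp h

lemma nonempty_mulEquiv_pi_zmod_pow_iff {e f : ι → ℕ} (hef : e ≤ f) :
    Nonempty ((∀ i, Multiplicative (ZMod (p ^ e i))) ≃* ∀ i, Multiplicative (ZMod (p ^ f i))) ↔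
      e = f := by
  refine ⟨fun ⟨φ⟩ => ?_, fun h => h ▸ ⟨MulEquiv.refl _⟩⟩
  have hcard := Nat.card_congr φ.toEquiv
  rw [card_pi_zmod_pow, card_pi_zmod_pow] at hcard
  have hsum := Nat.pow_right_injective (Fact.out : p.Prime).two_le hcard
  funext i
  exact (Finset.sum_eq_sum_iff_of_le fun i _ => hef i).mp hsum i (Finset.mem_univ i)

end PiZModPow

section Invariants

variable {r s : ℕ} {a : Fin r → ℕ} {b : Fin s → ℕ}

lemma exists_le_castLE_of_card_filter_lt_le (ha_pos : ∀ i, 0 < a i) (ha : Antitone a)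
    (hb : Antitone b)
    (h : ∀ m, (Finset.univ.filter fun i => m < a i).card ≤
      (Finset.univ.filter fun j => m < b j).card) :
    ∃ hrs : r ≤ s, ∀ i, a i ≤ b (Fin.castLE hrs i) := by
  have hrs : r ≤ s := by
    simpa [Finset.filter_true_of_mem fun i _ => ha_pos i] using
      (h 0).trans (Finset.card_filter_le _ _)
  refine ⟨hrs, fun i => not_lt.mp fun hlt => ?_⟩
  have hlow : Finset.Iic i ⊆ Finset.univ.filter fun i' => b (Fin.castLE hrs i) < a i' :=
    fun i' hi' => Finset.mem_filter.mpr
      ⟨Finset.mem_univ _, hlt.trans_le (ha (Finset.mem_Iic.mp hi'))⟩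
  have hup : (Finset.univ.filter fun j => b (Fin.castLE hrs i) < b j) ⊆
      Finset.Iio (Fin.castLE hrs i) :=
    fun j hj => Finset.mem_Iio.mpr <| lt_of_not_ge fun hle =>
      (hb hle).not_gt (Finset.mem_filter.mp hj).2
  have := (Finset.card_le_card hlow).trans ((h _).trans (Finset.card_le_card hup))
  simp at this

lemma exists_le_castLE_of_subgroup_le {p : ℕ} [Fact p.Prime] {G : Type*} [Group G]
    {N M : Subgroup G} [N.Normal] [M.Normal] (hNM : N ≤ M) (ha_pos : ∀ i, 0 < a i) (ha : Antitone a)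
    (hb : Antitone b) (eM : (G ⧸ M) ≃* ∀ i, Multiplicative (ZMod (p ^ a i)))
    (eN : (G ⧸ N) ≃* ∀ j, Multiplicative (ZMod (p ^ b j))) :
    ∃ hrs : r ≤ s, ∀ i, a i ≤ b (Fin.castLE hrs i) := by
  let Ψ := eM.toMonoidHom.comp ((QuotientGroup.map _ _ (.id G) hNM).comp eN.symm.toMonoidHom)
  have hΨ : Surjective Ψ := by
    simp only [Ψ, MonoidHom.coe_comp, MulEquiv.coe_toMonoidHom]
    exact eM.surjective.comp <| Surjective.comp
      (QuotientGroup.map_surjective_of_surjective _ _ _ QuotientGroup.mk_surjective hNM)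
      eN.symm.surjective
  exact exists_le_castLE_of_card_filter_lt_le ha_pos ha hb (card_filter_lt_le_of_surjective hΨ)

variable {k c : ℕ}

lemma sum_eq_sum_min_iff (hc : 0 < c) (hb_pos : ∀ j, 0 < b j) (hrs : r ≤ s)
    (hab : ∀ i, a i ≤ b (Fin.castLE hrs i)) (hac : ∀ i, a i ≤ c)
    (hk : ∀ i : Fin r, (i : ℕ) < k → a i = c) (hk_lt : ∀ i : Fin r, k ≤ (i : ℕ) → a i < c) :
    ∑ i, a i = ∑ j, min (b j) c ↔
      r = s ∧ ∀ i : Fin r, k ≤ (i : ℕ) → a i = b (Fin.castLE hrs i) := by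
  obtain ⟨t, rfl⟩ := Nat.exists_eq_add_of_le hrs
  have hle : ∀ i ∈ Finset.univ, a i ≤ min (b (Fin.castAdd t i)) c :=
    fun i _ => le_min (hab i) (hac i)
  have hpt (i : Fin r) : a i = min (b (Fin.castAdd t i)) c ↔
      (k ≤ (i : ℕ) → a i = b (Fin.castLE hrs i)) := by
    have hi : a i ≤ b (Fin.castAdd t i) := hab i
    change _ ↔ (_ → a i = b (Fin.castAdd t i))
    rcases le_or_gt k i with hki | hki
    · have := hk_lt i hki
      simp only [hki, true_imp_iff]
      omega
    · have := hk i hki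
      simp only [not_le.mpr hki, false_imp_iff, iff_true]
      omega
  have htail : ∑ j : Fin t, min (b (Fin.natAdd r j)) c = 0 ↔ r = r + t := by
    rw [Finset.sum_eq_zero_iff]
    refine ⟨fun h => by_contra fun hne => ?_, fun h j => absurd j.2 (by omega)⟩
    have := h ⟨0, by omega⟩ (Finset.mem_univ _)
    have := hb_pos (Fin.natAdd r ⟨0, by omega⟩)
    omega
  have hsum := Finset.sum_eq_sum_iff_of_le hle
  simp only [Finset.mem_univ, true_imp_iff] at hsum
  rw [Fin.sum_univ_add, ← htail, ← forall_congr' hpt, ← hsum]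
  have := Finset.sum_le_sum hle
  omega

lemma nonempty_mulEquiv_tail_iff {p : ℕ} [Fact p.Prime] (hrs : r ≤ s)
    (hab : ∀ i, a i ≤ b (Fin.castLE hrs i)) :
    (r = s ∧ Nonempty ((∀ i : {i : Fin r // k ≤ (i : ℕ)}, Multiplicative (ZMod (p ^ a i.1))) ≃*
        (∀ i : {i : Fin s // k ≤ (i : ℕ)}, Multiplicative (ZMod (p ^ b i.1))))) ↔
      r = s ∧ ∀ i : Fin r, k ≤ (i : ℕ) → a i = b (Fin.castLE hrs i) := by
  refine and_congr_right fun hr => ?_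
  subst hr
  rw [nonempty_mulEquiv_pi_zmod_pow_iff (e := fun i : {i : Fin r // k ≤ (i : ℕ)} => a i.1)
    (f := fun i => b i.1) fun i => hab i.1, funext_iff, Subtype.forall]
  rfl

end Invariants

lemma exponent_multiplicative_zmod_dvd (N : ℕ) : Monoid.exponent (Multiplicative (ZMod N)) ∣ N :=
  Monoid.exponent_dvd_iff_forall_pow_eq_one.mpr fun x => by
    rw [← ofAdd_toAdd x, ← ofAdd_nsmul, nsmul_eq_mul, ZMod.natCast_self, zero_mul, ofAdd_zero]

lemma exists_monoidHom_zmod_apply_ne_one {Q : Type*} [CommGroup Q] [Finite Q] {N : ℕ} [NeZero N]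
    (hN : Monoid.exponent Q ∣ N) {q : Q} (hq : q ≠ 1) :
    ∃ χ : Q →* Multiplicative (ZMod N), χ q ≠ 1 := by
  have : NeZero (Monoid.exponent Q : ℂ) := ⟨by exact_mod_cast Monoid.exponent_ne_zero_of_finite⟩
  have : NeZero (N : ℂ) := ⟨by exact_mod_cast NeZero.ne N⟩
  obtain ⟨φ, hφ⟩ := CommGroup.exists_apply_ne_one_of_hasEnoughRootsOfUnity Q ℂ hq
  let ψ : Q →* rootsOfUnity N ℂ := φ.codRestrict _ fun x => by
    rw [mem_rootsOfUnity, ← map_pow, Monoid.exponent_dvd_iff_forall_pow_eq_one.mp hN, map_one]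
  let e : rootsOfUnity N ℂ ≃* Multiplicative (ZMod N) := mulEquivOfCyclicCardEq <| by
    rw [Complex.card_rootsOfUnity, Nat.card_congr Multiplicative.toAdd, Nat.card_zmod]
  refine ⟨e.toMonoidHom.comp ψ, fun h => hφ ?_⟩
  have : ψ q = 1 := e.injective (by simpa using h)
  exact congrArg Subtype.val this

lemma le_iff_index_eq_of_le {G : Type*} [Group G] [Finite G] {H K : Subgroup G} (hHK : H ≤ K) :
    K ≤ H ↔ H.index = K.index := by
  refine ⟨fun hKH => by rw [le_antisymm hHK hKH], fun h => by_contra fun hKH => ?_⟩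
  exact (index_strictAnti (lt_of_le_not_ge hHK hKH)).ne h.symm

section PowCommutator

variable {G : Type*} [Group G] {n : ℕ}

variable (G n) in
def powCommutator : Subgroup G :=
  closure (Set.range (· ^ n) ∪ commutator G)

lemma powCommutator_le_iff {L : Subgroup G} :
    powCommutator G n ≤ L ↔ commutator G ≤ L ∧ ∀ g : G, g ^ n ∈ L := by
  rw [powCommutator, closure_le, Set.union_subset_iff, Set.range_subset_iff, and_comm]
  rfl

lemma commutator_le_powCommutator : commutator G ≤ powCommutator G n :=
  (powCommutator_le_iff.mp le_rfl).1

lemma pow_mem_powCommutator (g : G) : g ^ n ∈ powCommutator G n :=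
  (powCommutator_le_iff.mp le_rfl).2 g

lemma map_powCommutator_le {A : Type*} [CommGroup A] (f : G →* A) :
    (powCommutator G n).map f ≤ (powMonoidHom n : A →* A).range := by
  rw [map_le_iff_le_comap, powCommutator_le_iff]
  exact ⟨(Abelianization.commutator_subset_ker f).trans (MonoidHom.ker_le_comap _ _),
    fun g => ⟨f g, (map_pow f g n).symm⟩⟩

lemma map_powCommutator {A : Type*} [CommGroup A] {f : G →* A} (hf : Surjective f) :
    (powCommutator G n).map f = (powMonoidHom n : A →* A).range := by
  refine le_antisymm (map_powCommutator_le f) ?_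
  rintro _ ⟨y, rfl⟩
  obtain ⟨g, rfl⟩ := hf y
  exact ⟨g ^ n, pow_mem_powCommutator g, map_pow f g n⟩

lemma powCommutator_le_ker {A : Type*} [CommGroup A] (f : G →* A) (hA : Monoid.exponent A ∣ n) :
    powCommutator G n ≤ f.ker := by
  refine powCommutator_le_iff.mpr ⟨Abelianization.commutator_subset_ker f, fun g => ?_⟩
  rw [MonoidHom.mem_ker, map_pow, Monoid.exponent_dvd_iff_forall_pow_eq_one.mp hA]

lemma index_powCommutator {A : Type*} [CommGroup A] {f : G →* A} (hf : Surjective f)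
    (hker : f.ker = commutator G) :
    (powCommutator G n).index = (powMonoidHom n : A →* A).range.index := by
  rw [← map_powCommutator hf, index_map_eq _ hf (hker.trans_le commutator_le_powCommutator)]

lemma pow_eq_one_of_mem_powCommutator {m : ℕ} (hK : commutator G ≤ center G)
    (hKn : Monoid.exponent (commutator G) ∣ n) (hGm : ∀ g : G, g ^ m ∈ center G)
    (hm : ∀ g : G, (g ^ m) ^ n = 1) {x : G} (hx : x ∈ powCommutator G m) : x ^ n = 1 := by
  suffices powCommutator G m ≤ (powMonoidHom n : center G →* center G).ker.map (center G).subtype by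
    obtain ⟨y, hy, rfl⟩ := this hx
    exact congrArg Subtype.val hy
  refine powCommutator_le_iff.mpr ⟨fun k hk => ⟨⟨k, hK hk⟩, ?_, rfl⟩, fun g =>
    ⟨⟨g ^ m, hGm g⟩, Subtype.ext (hm g), rfl⟩⟩
  have := Monoid.exponent_dvd_iff_forall_pow_eq_one.mp hKn ⟨k, hk⟩
  exact Subtype.ext (by simpa using congrArg Subtype.val this)

lemma exists_monoidHom_zmod_apply_ne_one_of_notMem_powCommutator [Finite G] [NeZero n] {z : G}
    (hz : z ∉ powCommutator G n) : ∃ χ : G →* Multiplicative (ZMod n), χ z ≠ 1 := by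
  let π := (QuotientGroup.mk' (powMonoidHom n : Abelianization G →* _).range).comp
    Abelianization.of
  have hπ : π.ker ≤ powCommutator G n := by
    intro x hx
    obtain ⟨y, hy⟩ := (QuotientGroup.eq_one_iff _).mp hx
    obtain ⟨g, rfl⟩ := QuotientGroup.mk_surjective y
    have hgx : (g ^ n)⁻¹ * x ∈ commutator G := by
      rw [← Abelianization.ker_of, MonoidHom.mem_ker, map_mul, map_inv, map_pow]
      exact inv_mul_eq_one.mpr hy
    simpa using mul_mem (pow_mem_powCommutator g) (commutator_le_powCommutator (n := n) hgx)
  have hexp : Monoid.exponent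
      (Abelianization G ⧸ (powMonoidHom n : Abelianization G →* _).range) ∣ n := by
    refine Monoid.exponent_dvd_iff_forall_pow_eq_one.mpr fun y => ?_
    induction y using QuotientGroup.induction_on with | H a =>
    rw [← QuotientGroup.mk_pow, QuotientGroup.eq_one_iff]
    exact ⟨a, rfl⟩
  obtain ⟨χ, hχ⟩ := exists_monoidHom_zmod_apply_ne_one hexp (fun h => hz (hπ h))
  exact ⟨χ.comp π, hχ⟩

end PowCommutator

section CentralAut

variable {G : Type*} [Group G]

def MulAut.IsCentral (α : MulAut G) : Prop :=
  ∀ x, x⁻¹ * α x ∈ center G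

def mulCentralHom (f : G →* center G) : G →* G where
  toFun x := x * f x
  map_one' := by simp
  map_mul' x y := by
    simp only [map_mul, coe_mul]
    rw [mul_assoc x, ← mul_assoc y, mem_center_iff.mp (f x).2 y]
    simp only [mul_assoc]

lemma inv_mul_mulCentralHom (f : G →* center G) (x : G) : x⁻¹ * mulCentralHom f x = f x :=
  inv_mul_cancel_left x _

def zmodPowHom {C : Type*} [CommGroup C] {N : ℕ} (w : C) (hw : w ^ N = 1) :
    Multiplicative (ZMod N) →* C :=
  AddMonoidHom.toMultiplicativeLeft <|
    ZMod.lift N ⟨zmultiplesHom _ (Additive.ofMul w), by simpa [← ofMul_pow] using hw⟩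

lemma zmodPowHom_intCast {C : Type*} [CommGroup C] {N : ℕ} (w : C) (hw : w ^ N = 1) (m : ℤ) :
    zmodPowHom w hw (.ofAdd (m : ZMod N)) = w ^ m := by
  simp [zmodPowHom]

lemma zmodPowHom_injective {C : Type*} [CommGroup C] {N : ℕ} {w : C} {hw : w ^ N = 1}
    (hN : orderOf w = N) : Injective (zmodPowHom w hw) := by
  rw [injective_iff_map_eq_one]
  intro k hk
  obtain ⟨m, hm⟩ := ZMod.intCast_surjective k.toAdd
  rw [← ofAdd_toAdd k, ← hm, zmodPowHom_intCast, ← orderOf_dvd_iff_zpow_eq_one, hN,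
    ← ZMod.intCast_zmod_eq_zero_iff_dvd, hm] at hk
  rw [← ofAdd_toAdd k, hk, ofAdd_zero]

lemma MulAut.IsCentral.apply_eq_self_of_mem_powCommutator {α : MulAut G} (hα : α.IsCentral)
    {n : ℕ} (hn : Monoid.exponent (center G) ∣ n) {z : G} (hz : z ∈ powCommutator G n) :
    α z = z := by
  let f : G →* center G := MonoidHom.mk' (fun x => ⟨x⁻¹ * α x, hα x⟩) fun x y => Subtype.ext <|
    calc (x * y)⁻¹ * α (x * y) = y⁻¹ * (x⁻¹ * α x) * α y := by rw [map_mul]; group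
      _ = x⁻¹ * α x * (y⁻¹ * α y) := by rw [mem_center_iff.mp (hα x) y⁻¹]; group
  have hfz : z⁻¹ * α z = 1 := congrArg Subtype.val (powCommutator_le_ker f hn hz)
  exact (inv_mul_eq_one.mp hfz).symm

variable [Finite G]

theorem exists_isCentral_apply_ne {N : ℕ} {w : center G} (hw : orderOf w = N)
    (χ : G →* Multiplicative (ZMod N)) (hχw : IsUnit (1 + (χ w).toAdd)) {z : G} (hz : χ z ≠ 1) :
    ∃ α : MulAut G, α.IsCentral ∧ α z ≠ z := by
  let ω := zmodPowHom w (hw ▸ pow_orderOf_eq_one w)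
  have hχω (k : Multiplicative (ZMod N)) : (χ (ω k)).toAdd = k.toAdd * (χ w).toAdd := by
    obtain ⟨m, hm⟩ := ZMod.intCast_surjective k.toAdd
    rw [← ofAdd_toAdd k, ← hm, zmodPowHom_intCast, coe_zpow, map_zpow, toAdd_zpow, toAdd_ofAdd,
      zsmul_eq_mul]
  let σ := mulCentralHom (ω.comp χ)
  have hinj : Injective σ := by
    rw [injective_iff_map_eq_one]
    intro x hx
    have h1 : (ω (χ x) : G) = x⁻¹ := by
      rw [← mul_one x⁻¹, ← hx]
      exact (inv_mul_mulCentralHom (ω.comp χ) x).symm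
    have h2 : (χ x).toAdd * (1 + (χ w).toAdd) = 0 := by
      have := congrArg (fun g => (χ g).toAdd) h1
      simp only [hχω, map_inv, toAdd_inv] at this
      linear_combination this
    have h3 : χ x = 1 := hχw.mul_left_eq_zero.mp h2
    simpa [h3] using h1
  refine ⟨MulEquiv.ofBijective σ (Finite.injective_iff_bijective.mp hinj), fun x => ?_,
    fun h => hz ?_⟩
  · rw [MulEquiv.ofBijective_apply, inv_mul_mulCentralHom]
    exact (ω (χ x)).2
  · apply zmodPowHom_injective hw
    have := inv_mul_mulCentralHom (ω.comp χ) z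
    rw [show mulCentralHom (ω.comp χ) z = z from h, inv_mul_cancel] at this
    exact (Subtype.ext this).symm.trans (map_one ω).symm

theorem exists_isCentral_apply_ne_of_notMem_powCommutator (hK : commutator G ≤ center G)
    {z : G} (hz : z ∉ powCommutator G (Monoid.exponent (commutator G))) :
    ∃ α : MulAut G, α.IsCentral ∧ α z ≠ z := by
  have : NeZero (Monoid.exponent (commutator G)) := ⟨Monoid.exponent_ne_zero_of_finite⟩
  have : IsMulCommutative (commutator G) :=
    ⟨⟨fun x y => Subtype.ext (mem_center_iff.mp (hK y.2) x)⟩⟩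
  obtain ⟨w, hw⟩ := Monoid.exists_orderOf_eq_exponent (.of_finite (G := commutator G))
  obtain ⟨χ, hχ⟩ := exists_monoidHom_zmod_apply_ne_one_of_notMem_powCommutator hz
  have hχw : χ w = 1 := powCommutator_le_ker χ (exponent_multiplicative_zmod_dvd _)
    (commutator_le_powCommutator w.2)
  refine exists_isCentral_apply_ne (w := (⟨w, hK w.2⟩ : center G)) ?_ χ (by simp [hχw]) hχ
  rw [orderOf_mk, orderOf_coe, hw]

theorem exists_isCentral_apply_ne_of_lt_exponent_center {p c d : ℕ} [Fact p.Prime]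
    (hK : commutator G ≤ center G) (hc : c ≠ 0) (hcd : c < d)
    (hGZ : ∀ g : G, g ^ p ^ c ∈ center G) (hKc : Monoid.exponent (commutator G) ∣ p ^ c)
    (hZ : Monoid.exponent (center G) = p ^ d) (hZH : center G ≤ powCommutator G (p ^ c)) :
    ∃ α : MulAut G, α.IsCentral ∧ ∃ z ∈ center G, α z ≠ z := by
  have hp := (Fact.out : p.Prime)
  obtain ⟨w, hw⟩ := Monoid.exists_orderOf_eq_exponent (.of_finite (G := center G))
  rw [hZ] at hw
  have hGZd (g : G) : (g ^ p ^ c) ^ p ^ d = 1 := by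
    simpa [hZ] using congrArg Subtype.val (Monoid.pow_exponent_eq_one (⟨_, hGZ g⟩ : center G))
  -- `G^{p^d} γ₂(G)` has exponent dividing `p^c`, so it misses `w`.
  have hwH : (w : G) ∉ powCommutator G (p ^ d) := by
    intro hmem
    have hpow : p ^ d = p ^ c * p ^ (d - c) := by rw [← pow_add]; congr 1; omega
    have hw1 := pow_eq_one_of_mem_powCommutator hK hKc
      (fun g => hpow ▸ pow_mul g _ _ ▸ pow_mem (hGZ g) _)
      (fun g => by rw [← pow_mul, mul_comm, pow_mul, hGZd]) hmem
    have := orderOf_dvd_of_pow_eq_one hw1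
    rw [orderOf_coe, hw, Nat.pow_dvd_pow_iff_le_right hp.one_lt] at this
    omega
  have : NeZero (p ^ d) := ⟨pow_ne_zero _ hp.ne_zero⟩
  obtain ⟨χ, hχ⟩ := exists_monoidHom_zmod_apply_ne_one_of_notMem_powCommutator hwH
  obtain ⟨y, hy⟩ := map_powCommutator_le χ (mem_map_of_mem χ (hZH w.2))
  have hnil : IsNilpotent ((p ^ c : ℕ) : ZMod (p ^ d)) :=
    ⟨d, by rw [← Nat.cast_pow, ZMod.natCast_eq_zero_iff, ← pow_mul]
           exact pow_dvd_pow p (Nat.le_mul_of_pos_left d (Nat.pos_of_ne_zero hc))⟩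
  have hunit : IsUnit (1 + (χ w).toAdd) := by
    refine IsNilpotent.isUnit_one_add ?_
    rw [← hy, powMonoidHom_apply, toAdd_pow, nsmul_eq_mul]
    exact (Commute.all _ _).isNilpotent_mul_right hnil
  obtain ⟨α, hα, hαw⟩ := exists_isCentral_apply_ne hw χ hunit hχ
  exact ⟨α, hα, w, w.2, hαw⟩

theorem forall_isCentral_fix_center_iff {p c : ℕ} [Fact p.Prime] (hp : IsPGroup p G)
    (hK : commutator G ≤ center G) (hc : c ≠ 0) (hGZ : ∀ g : G, g ^ p ^ c ∈ center G)
    (hKc : Monoid.exponent (commutator G) = p ^ c) :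
    (∀ α : MulAut G, α.IsCentral → ∀ z ∈ center G, α z = z) ↔
      Monoid.exponent (center G) = p ^ c ∧ center G ≤ powCommutator G (p ^ c) := by
  refine ⟨fun hfix => ?_, fun ⟨hZ, hZH⟩ α hα z hz =>
    hα.apply_eq_self_of_mem_powCommutator hZ.dvd (hZH hz)⟩
  have hZH : center G ≤ powCommutator G (p ^ c) := fun z hz => by_contra fun hzH => by
    obtain ⟨α, hα, hαz⟩ := exists_isCentral_apply_ne_of_notMem_powCommutator hK (hKc ▸ hzH)
    exact hαz (hfix α hα z hz)
  obtain ⟨d, hd⟩ := (hp.to_subgroup (center G)).exists_exponent_eq_pow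
  have hcd : c ≤ d := by
    have := Monoid.exponent_dvd_of_monoidHom (inclusion hK) (inclusion_injective hK)
    rwa [hKc, hd, Nat.pow_dvd_pow_iff_le_right (Fact.out : p.Prime).one_lt] at this
  refine ⟨?_, hZH⟩
  rcases hcd.eq_or_lt with rfl | hlt
  · exact hd
  obtain ⟨α, hα, z, hz, hαz⟩ :=
    exists_isCentral_apply_ne_of_lt_exponent_center hK hc hlt hGZ hKc.dvd hd hZH
  exact absurd (hfix α hα z hz) hαz

theorem center_le_powCommutator_iff {p c : ℕ} [Fact p.Prime] {ι κ : Type*} [Fintype ι]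
    [Fintype κ] {a : ι → ℕ} {b : κ → ℕ} (hK : commutator G ≤ center G)
    (hGZ : ∀ g : G, g ^ p ^ c ∈ center G)
    (eZ : (G ⧸ center G) ≃* ∀ i, Multiplicative (ZMod (p ^ a i)))
    (eγ : (G ⧸ commutator G) ≃* ∀ j, Multiplicative (ZMod (p ^ b j))) :
    center G ≤ powCommutator G (p ^ c) ↔ ∑ i, a i = ∑ j, min (b j) c := by
  have hker : (eγ.toMonoidHom.comp (QuotientGroup.mk' (commutator G))).ker = commutator G := by
    rw [MonoidHom.ker_comp_of_injective _ _ eγ.injective, QuotientGroup.ker_mk']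
  rw [le_iff_index_eq_of_le (powCommutator_le_iff.mpr ⟨hK, hGZ⟩),
    index_powCommutator (eγ.surjective.comp (QuotientGroup.mk'_surjective _)) hker,
    index_range_powMonoidHom_pi_zmod_pow, index, Nat.card_congr eZ.toEquiv, card_pi_zmod_pow,
    (Nat.pow_right_injective (Fact.out : p.Prime).two_le).eq_iff, eq_comm]

end CentralAut

theorem stmt16_general {p : ℕ} [Fact p.Prime] {G : Type*} [Group G] [Finite G]
    (hp : IsPGroup p G)
    (h2 : commutator G ≤ Subgroup.center G) (hna : commutator G ≠ ⊥)
    {r s : ℕ} (a : Fin r → ℕ) (b : Fin s → ℕ)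
    (ha_pos : ∀ i, 0 < a i) (hb_pos : ∀ i, 0 < b i)
    (ha_anti : ∀ i j : Fin r, i ≤ j → a j ≤ a i)
    (hb_anti : ∀ i j : Fin s, i ≤ j → b j ≤ b i)
    (eZ : (G ⧸ Subgroup.center G) ≃* ∀ i : Fin r, Multiplicative (ZMod (p ^ a i)))
    (eγ : (G ⧸ commutator G) ≃* ∀ i : Fin s, Multiplicative (ZMod (p ^ b i)))
    (c : ℕ)
    (hc : Monoid.exponent (G ⧸ Subgroup.center G) = p ^ c)
    (hcγ : Monoid.exponent ↥(commutator G) = p ^ c)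
    (k : ℕ)
    (hk : ∀ i : Fin r, (i : ℕ) < k → a i = c)
    (hk_max : ∀ hi : k < r, a ⟨k, hi⟩ ≠ c) :
    (∀ α : MulAut G, (∀ x : G, x⁻¹ * α x ∈ Subgroup.center G) →
        ∀ z ∈ Subgroup.center G, α z = z) ↔
      (r = s ∧
        Nonempty
          ((∀ i : {i : Fin r // k ≤ (i : ℕ)}, Multiplicative (ZMod (p ^ a i.1))) ≃*
            (∀ i : {i : Fin s // k ≤ (i : ℕ)}, Multiplicative (ZMod (p ^ b i.1)))) ∧
        Monoid.exponent ↥(Subgroup.center G) = Monoid.exponent ↥(commutator G)) := by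
  have hc0 : c ≠ 0 := by
    rintro rfl
    have := (nontrivial_iff_ne_bot _).mpr hna
    exact not_subsingleton _ (Monoid.exp_eq_one_iff.mp (hcγ.trans (pow_zero p)))
  have hGZ (g : G) : g ^ p ^ c ∈ center G := by
    rw [← QuotientGroup.eq_one_iff, QuotientGroup.mk_pow, ← hc]
    exact Monoid.pow_exponent_eq_one _
  obtain ⟨hrs, hab⟩ := exists_le_castLE_of_subgroup_le h2 ha_pos ha_anti hb_anti eZ eγ
  have hac (i : Fin r) : a i ≤ c :=
    (Nat.pow_dvd_pow_iff_le_right (Fact.out : p.Prime).one_lt).mp <|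
      hc ▸ Monoid.exponent_eq_of_mulEquiv eZ ▸ dvd_exponent_pi_zmod (fun i => p ^ a i) i
  have hk_lt (i : Fin r) (hi : k ≤ (i : ℕ)) : a i < c :=
    (ha_anti ⟨k, by omega⟩ i hi).trans_lt ((hac _).lt_of_ne (hk_max _))
  refine (forall_isCentral_fix_center_iff hp h2 hc0 hGZ hcγ).trans ?_
  rw [center_le_powCommutator_iff h2 hGZ eZ eγ,
    sum_eq_sum_min_iff (Nat.pos_of_ne_zero hc0) hb_pos hrs hab hac hk hk_lt,
    ← nonempty_mulEquiv_tail_iff (p := p) hrs hab, hcγ]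
  tauto

/-- Main theorem: for a finite p-group G of nilpotency class 2 with invariant
decompositions G/Z(G) = Π_{i<r} C_{p^{a_i}}, G/γ₂(G) = Π_{i<s} C_{p^{b_i}},
exponent p^c of G/Z(G) and γ₂(G), and k the largest index with a_1 = ⋯ = a_k = c:
every central automorphism of G fixes Z(G) element-wise iff r = s,
(G/Z(G))/M̄ ≅ (G/γ₂(G))/N̄ (i.e. the products of the remaining factors are
isomorphic), and the exponents of Z(G) and γ₂(G) coincide. -/
theorem stmt16 {p : ℕ} [Fact p.Prime] {G : Type*} [Group G] [Finite G]
    (hp : IsPGroup p G)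
    (h2 : commutator G ≤ Subgroup.center G) (hna : commutator G ≠ ⊥)
    {r s : ℕ} (a : Fin r → ℕ) (b : Fin s → ℕ)
    (ha_pos : ∀ i, 0 < a i) (hb_pos : ∀ i, 0 < b i)
    (ha_anti : ∀ i j : Fin r, i ≤ j → a j ≤ a i)
    (hb_anti : ∀ i j : Fin s, i ≤ j → b j ≤ b i)
    (eZ : (G ⧸ Subgroup.center G) ≃* ∀ i : Fin r, Multiplicative (ZMod (p ^ a i)))
    (eγ : (G ⧸ commutator G) ≃* ∀ i : Fin s, Multiplicative (ZMod (p ^ b i)))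
    (c : ℕ)
    (hc : Monoid.exponent (G ⧸ Subgroup.center G) = p ^ c)
    (hcγ : Monoid.exponent ↥(commutator G) = p ^ c)
    (k : ℕ) (hkr : k ≤ r) (hks : k ≤ s)
    (hk : ∀ i : Fin r, (i : ℕ) < k → a i = c)
    (hk_max : ∀ hi : k < r, a ⟨k, hi⟩ ≠ c) :
    (∀ α : MulAut G, (∀ x : G, x⁻¹ * α x ∈ Subgroup.center G) →
        ∀ z ∈ Subgroup.center G, α z = z) ↔
      (r = s ∧
        Nonempty
          ((∀ i : {i : Fin r // k ≤ (i : ℕ)}, Multiplicative (ZMod (p ^ a i.1))) ≃*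
            (∀ i : {i : Fin s // k ≤ (i : ℕ)}, Multiplicative (ZMod (p ^ b i.1)))) ∧
        Monoid.exponent ↥(Subgroup.center G) = Monoid.exponent ↥(commutator G)) :=
  stmt16_general hp h2 hna a b ha_pos hb_pos ha_anti hb_anti eZ eγ c hc hcγ k hk hk_max
end
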